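/- arXiv:1707.08992 — 2 statements merged into one kernel-verified Lean document; each statement's English description precedes it below -/
import Mathlib

section
/- In dimension one, with O = (0,L), a : ℝ → ℝ smooth 1-periodic with λ ≤ a ≤ 1 for some λ > 0, and f smooth, the solution uₑ of −(a(x/ε) uₑ')' = f on O with uₑ(0) = uₑ(L) = 0 converges uniformly to the solution u₀ of −a₀ u₀'' = f with the same boundary conditions, where a₀ = (∫₀¹ a(y)⁻¹ dy)⁻¹ is the harmonic mean, and moreover max_{x ∈ [0,L]} |uₑ(x) − u₀(x)| ≤ C ε with C depending only on L, f, a. -/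
open MeasureTheory Set intervalIntegral

/-- Smoothness facts extracted from `ContDiff ℝ ⊤`. -/
private theorem homog_smooth_facts (f : ℝ → ℝ) (hf : ContDiff ℝ (⊤ : ℕ∞) f) :
    Differentiable ℝ f ∧ Differentiable ℝ (deriv f) ∧ Continuous (deriv f) := by
  have h := contDiff_infty_iff_deriv.mp (hf.of_le (le_refl _))
  exact ⟨h.1, h.2.differentiable (by simp), h.2.continuous⟩

/-- Explicit representation of the solution of `-(q u')' = f`, `u 0 = 0`, in terms of
the primitive `F` of `f`. -/
private theorem homog_rep (L : ℝ) (hL : 0 < L) (f q v : ℝ → ℝ)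
    (hf : Continuous f) (hq : ContDiff ℝ (⊤ : ℕ∞) q) (hv : ContDiff ℝ (⊤ : ℕ∞) v)
    (hqpos : ∀ y, 0 < q y)
    (heq : ∀ x ∈ Ioo 0 L, deriv (fun x' => q x' * deriv v x') x = - f x)
    (hv0 : v 0 = 0) :
    ∃ c, ∀ x ∈ Icc 0 L, v x =
      ∫ t in (0:ℝ)..x, (c - ∫ s in (0:ℝ)..t, f s) * (q t)⁻¹ := by
  set F : ℝ → ℝ := fun t => ∫ s in (0:ℝ)..t, f s with hFdef
  have hFd : ∀ t, HasDerivAt F (f t) t := fun t => (hf.integral_hasStrictDerivAt 0 t).hasDerivAt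
  obtain ⟨hvd, hdvd, hdvc⟩ := homog_smooth_facts v hv
  have hg : Differentiable ℝ (fun x => q x * deriv v x) :=
    ((homog_smooth_facts q hq).1).mul hdvd
  set c := q (L/2) * deriv v (L/2) + F (L/2) with hc
  have hmid : L/2 ∈ Ioo 0 L := ⟨half_pos hL, half_lt_self hL⟩
  have hconst : ∀ t ∈ Ioo 0 L, q t * deriv v t + F t = c := by
    intro t ht
    have hsub : uIcc t (L/2) ⊆ Ioo 0 L := Set.ordConnected_Ioo.uIcc_subset ht hmid
    have h0 : ∀ p ∈ uIcc t (L/2),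
        HasDerivAt (fun y => q y * deriv v y + F y) ((fun _ : ℝ => (0:ℝ)) p) p := by
      intro p hp
      have h1 := ((hg p).hasDerivAt).add (hFd p)
      rwa [heq p (hsub hp), neg_add_cancel] at h1
    have h2 := intervalIntegral.integral_eq_sub_of_hasDerivAt h0
      (intervalIntegrable_const)
    simp only [intervalIntegral.integral_const, smul_eq_mul, mul_zero] at h2
    rw [hc]
    linarith [h2]
  have hderiv : ∀ t ∈ Ioo 0 L, deriv v t = (c - F t) * (q t)⁻¹ := by
    intro t ht
    have h := hconst t ht
    field_simp
    rw [eq_div_iff (hqpos t).ne']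
    linarith
  refine ⟨c, fun x hx => ?_⟩
  have hftc : ∫ t in (0:ℝ)..x, deriv v t = v x - v 0 :=
    intervalIntegral.integral_eq_sub_of_hasDerivAt
      (fun t _ => (hvd t).hasDerivAt) (hdvc.intervalIntegrable _ _)
  rw [hv0, sub_zero] at hftc
  rw [← hftc]
  apply intervalIntegral.integral_congr_ae
  have hne : ∀ᵐ t : ℝ, t ∉ ({L} : Set ℝ) :=
    measure_eq_zero_iff_ae_notMem.mp Real.volume_singleton
  filter_upwards [hne] with t htne htmem
  rw [Set.uIoc_of_le hx.1] at htmem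
  have htL : t < L := lt_of_le_of_ne (le_trans htmem.2 hx.2) (by simpa using htne)
  exact hderiv t ⟨htmem.1, htL⟩

/-- Oscillation lemma: bounded antiderivative of `ρ(·/ε) - m` for a `1`-periodic `ρ`
with mean `m`. -/
private theorem homog_osc (ρ : ℝ → ℝ) (hρ : Continuous ρ) (hper : Function.Periodic ρ 1)
    (m : ℝ) (hm : (∫ s in (0:ℝ)..1, ρ s) = m) :
    ∃ M : ℝ, 0 ≤ M ∧ ∀ ε > (0:ℝ), ∃ H : ℝ → ℝ, H 0 = 0 ∧
      (∀ x, HasDerivAt H (ρ (x/ε) - m) x) ∧ (∀ x, |H x| ≤ ε * M) := by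
  set G : ℝ → ℝ := fun y => ∫ s in (0:ℝ)..y, (ρ s - m) with hGdef
  have hρm : Continuous (fun s => ρ s - m) := hρ.sub continuous_const
  have hGd : ∀ y, HasDerivAt G (ρ y - m) y :=
    fun y => (hρm.integral_hasStrictDerivAt 0 y).hasDerivAt
  have hint01 : (∫ s in (0:ℝ)..1, (ρ s - m)) = 0 := by
    rw [intervalIntegral.integral_sub (hρ.intervalIntegrable _ _)
      (intervalIntegrable_const), hm]
    simp
  have hperm : Function.Periodic (fun s => ρ s - m) 1 := fun y => by simp [hper y]
  have hGper : Function.Periodic G 1 := by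
    intro y
    have hadj : G y + (∫ s in y..(y+1), (ρ s - m)) = G (y+1) :=
      intervalIntegral.integral_add_adjacent_intervals
        (hρm.intervalIntegrable _ _) (hρm.intervalIntegrable _ _)
    have : (∫ s in y..(y+1), (ρ s - m)) = 0 := by
      have := hperm.intervalIntegral_add_eq y 0
      simpa [hint01] using this
    rw [this, add_zero] at hadj
    exact hadj.symm
  have hGc : Continuous G :=
    Differentiable.continuous (fun y => (hGd y).differentiableAt)
  obtain ⟨M0, hM0⟩ := (isCompact_Icc (a := (0:ℝ)) (b := 1)).exists_bound_of_continuousOn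
    hGc.continuousOn
  have hM0nn : 0 ≤ M0 := le_trans (norm_nonneg _) (hM0 0 ⟨le_refl _, zero_le_one⟩)
  have hGbd : ∀ y, |G y| ≤ M0 := by
    intro y
    obtain ⟨z, hz, hzy⟩ := hGper.exists_mem_Ico₀ one_pos y
    rw [hzy]
    exact hM0 z ⟨hz.1, hz.2.le⟩
  refine ⟨M0, hM0nn, fun ε hε => ⟨fun x => ε * G (x / ε), ?_, ?_, ?_⟩⟩
  · simp [hGdef]
  · intro x
    have h := ((hGd (x/ε)).comp x ((hasDerivAt_id x).div_const ε)).const_mul ε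
    have he : ε * ((ρ (x/ε) - m) * (1/ε)) = ρ (x/ε) - m := by field_simp
    rw [he] at h
    exact h
  · intro x
    rw [abs_mul, abs_of_pos hε]
    exact mul_le_mul_of_nonneg_left (hGbd _) hε.le

/-- One-dimensional periodic homogenization with rate `ε`:
the solutions `u ε` of `-(a(x/ε) u')' = f` on `(0,L)` with zero boundary values converge
uniformly, with rate `ε`, to the solution `u₀` of `-a₀ u₀'' = f`, where `a₀` is the
harmonic mean of the 1-periodic coefficient `a`. -/
theorem stmt1 (L lam : ℝ) (hL : 0 < L) (hlam : 0 < lam)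
    (a f : ℝ → ℝ)
    (ha : ContDiff ℝ (⊤ : ℕ∞) a) (haper : ∀ y, a (y + 1) = a y)
    (hbd : ∀ y, a y ∈ Icc lam 1)
    (hf : ContDiff ℝ (⊤ : ℕ∞) f)
    (a0 : ℝ) (ha0 : a0 = (∫ y in (0:ℝ)..1, (a y)⁻¹)⁻¹)
    (u : ℝ → ℝ → ℝ) (u0 : ℝ → ℝ)
    (hu_smooth : ∀ ε > (0:ℝ), ContDiff ℝ (⊤ : ℕ∞) (u ε))
    (hu_eq : ∀ ε > (0:ℝ), ∀ x ∈ Ioo 0 L,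
        deriv (fun x' => a (x' / ε) * deriv (u ε) x') x = - f x)
    (hu_bc : ∀ ε > (0:ℝ), u ε 0 = 0 ∧ u ε L = 0)
    (hu0_smooth : ContDiff ℝ (⊤ : ℕ∞) u0)
    (hu0_eq : ∀ x ∈ Ioo 0 L, a0 * deriv (deriv u0) x = - f x)
    (hu0_bc : u0 0 = 0 ∧ u0 L = 0) :
    ∃ C : ℝ, ∀ ε > (0:ℝ), ∀ x ∈ Icc 0 L, |u ε x - u0 x| ≤ C * ε := by
  have hfc : Continuous f := hf.continuous
  set F : ℝ → ℝ := fun t => ∫ s in (0:ℝ)..t, f s with hFdef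
  have hFd : ∀ t, HasDerivAt F (f t) t := fun t => (hfc.integral_hasStrictDerivAt 0 t).hasDerivAt
  have hFc : Continuous F := Differentiable.continuous (fun t => (hFd t).differentiableAt)
  -- the periodic function ρ = a⁻¹ and its mean m
  set ρ : ℝ → ℝ := fun s => (a s)⁻¹ with hρdef
  have hapos : ∀ y, 0 < a y := fun y => hlam.trans_le (hbd y).1
  have hρc : Continuous ρ := ha.continuous.inv₀ (fun s => (hapos s).ne')
  have hρper : Function.Periodic ρ 1 := fun y => by simp [hρdef, haper y]
  set m : ℝ := ∫ y in (0:ℝ)..1, ρ y with hmdef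
  have hρ1 : ∀ s, 1 ≤ ρ s := fun s => (one_le_inv₀ (hapos s)).mpr (hbd s).2
  have hρlam : ∀ s, ρ s ≤ lam⁻¹ := fun s => inv_anti₀ hlam (hbd s).1
  have hρ0 : ∀ s, 0 ≤ ρ s := fun s => le_trans zero_le_one (hρ1 s)
  have hm1 : (1:ℝ) ≤ m := by
    have := intervalIntegral.integral_mono_on (zero_le_one)
      (_root_.intervalIntegrable_const (μ := volume) (c := (1:ℝ))) (hρc.intervalIntegrable 0 1)
      (fun s _ => hρ1 s)
    simpa using this
  have hmpos : 0 < m := lt_of_lt_of_le zero_lt_one hm1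
  have ha0pos : 0 < a0 := by rw [ha0]; exact inv_pos.mpr hmpos
  have ha0inv : a0⁻¹ = m := by rw [ha0, inv_inv]
  -- representation of u0
  have heq0 : ∀ x ∈ Ioo 0 L, deriv (fun x' => (fun _ : ℝ => a0) x' * deriv u0 x') x = - f x := by
    intro x hx
    have hd := (homog_smooth_facts u0 hu0_smooth).2.1
    rw [deriv_const_mul a0 (hd x)]
    exact hu0_eq x hx
  obtain ⟨c0, hc0⟩ := homog_rep L hL f (fun _ => a0) u0 hfc contDiff_const hu0_smooth
    (fun _ => ha0pos) heq0 hu0_bc.1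
  -- bounds on compact interval
  obtain ⟨CF, hCF⟩ := (isCompact_Icc (a := (0:ℝ)) (b := L)).exists_bound_of_continuousOn
    ((continuous_const.sub hFc).continuousOn (s := Icc 0 L))
  obtain ⟨Cf, hCf⟩ := (isCompact_Icc (a := (0:ℝ)) (b := L)).exists_bound_of_continuousOn
    (hfc.continuousOn (s := Icc 0 L))
  have hCF0 : 0 ≤ CF := le_trans (norm_nonneg _) (hCF 0 ⟨le_refl _, hL.le⟩)
  have hCf0 : 0 ≤ Cf := le_trans (norm_nonneg _) (hCf 0 ⟨le_refl _, hL.le⟩)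
  -- oscillation bound
  obtain ⟨M, hM0, hMkey⟩ := homog_osc ρ hρc hρper m rfl
  set K : ℝ := M * (CF + Cf * L) with hKdef
  have hK0 : 0 ≤ K := mul_nonneg hM0 (by positivity)
  refine ⟨K * (lam⁻¹ + 1), ?_⟩
  intro ε hε x hx
  -- representation of u ε
  have hq : ContDiff ℝ (⊤ : ℕ∞) (fun x : ℝ => a (x / ε)) := ha.comp (contDiff_id.div_const ε)
  obtain ⟨cε, hcε⟩ := homog_rep L hL f (fun x => a (x / ε)) (u ε) hfc hq (hu_smooth ε hε)
    (fun y => hapos _) (hu_eq ε hε) (hu_bc ε hε).1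
  obtain ⟨H, hH0, hHd, hHb⟩ := hMkey ε hε
  have hcont1 : Continuous (fun t : ℝ => ρ (t / ε)) := hρc.comp (continuous_id.div_const ε)
  set B : ℝ → ℝ := fun y => ∫ t in (0:ℝ)..y, ρ (t / ε) with hBdef
  set I : ℝ → ℝ := fun y => ∫ t in (0:ℝ)..y, (c0 - F t) * (ρ (t / ε) - m) with hIdef
  -- integration by parts for I
  have hIparts : ∀ y, I y = (c0 - F y) * H y + ∫ t in (0:ℝ)..y, f t * H t := by
    intro y
    have hP := intervalIntegral.integral_mul_deriv_eq_deriv_mul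
      (u := fun t => c0 - F t) (u' := fun t => -f t) (v := H) (v' := fun t => ρ (t / ε) - m)
      (fun t _ => (hFd t).const_sub c0) (fun t _ => hHd t)
      ((hfc.neg).intervalIntegrable 0 y)
      ((hcont1.sub continuous_const).intervalIntegrable 0 y)
    rw [hIdef]
    simp only [hP, hH0, mul_zero, sub_zero]
    rw [show ∀ z w : ℝ → ℝ, (∫ t in (0:ℝ)..y, (-z t) * w t) = - ∫ t in (0:ℝ)..y, z t * w t
      from fun z w => by rw [← intervalIntegral.integral_neg]; congr 1; ext t; ring]
    ring
  have hHbd : ∀ t, |H t| ≤ ε * M := hHb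
  have hIbound : ∀ y ∈ Icc 0 L, |I y| ≤ ε * K := by
    intro y hy
    rw [hIparts y]
    have h1 : |(c0 - F y) * H y| ≤ CF * (ε * M) := by
      rw [abs_mul]
      exact mul_le_mul (hCF y hy) (hHbd y) (abs_nonneg _) hCF0
    have h2 : ‖∫ t in (0:ℝ)..y, f t * H t‖ ≤ (Cf * (ε * M)) * |y - 0| := by
      apply intervalIntegral.norm_integral_le_of_norm_le_const
      intro t ht
      rw [Set.uIoc_of_le hy.1] at ht
      have htL : t ∈ Icc 0 L := ⟨ht.1.le, le_trans ht.2 hy.2⟩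
      calc ‖f t * H t‖ = |f t| * |H t| := abs_mul _ _
        _ ≤ Cf * (ε * M) := mul_le_mul (hCf t htL) (hHbd t) (abs_nonneg _) hCf0
    have h3 : (Cf * (ε * M)) * |y - 0| ≤ (Cf * (ε * M)) * L := by
      apply mul_le_mul_of_nonneg_left _ (by positivity)
      rw [sub_zero, abs_of_nonneg hy.1]; exact hy.2
    rw [show (∀ z : ℝ, |z| = ‖z‖) from fun z => rfl] at h2
    calc |(c0 - F y) * H y + ∫ t in (0:ℝ)..y, f t * H t|
        ≤ |(c0 - F y) * H y| + |∫ t in (0:ℝ)..y, f t * H t| := abs_add_le _ _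
      _ ≤ CF * (ε * M) + (Cf * (ε * M)) * L := add_le_add h1 (le_trans h2 h3)
      _ = ε * K := by rw [hKdef]; ring
  -- bounds on B
  have hBbound : ∀ y ∈ Icc 0 L, |B y| ≤ lam⁻¹ * L := by
    intro y hy
    have h2 : ‖∫ t in (0:ℝ)..y, ρ (t / ε)‖ ≤ lam⁻¹ * |y - 0| := by
      apply intervalIntegral.norm_integral_le_of_norm_le_const
      intro t _
      rw [Real.norm_eq_abs, abs_of_nonneg (hρ0 _)]
      exact hρlam _
    refine le_trans h2 (mul_le_mul_of_nonneg_left ?_ (by positivity))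
    rw [sub_zero, abs_of_nonneg hy.1]; exact hy.2
  have hBL : L ≤ B L := by
    have := intervalIntegral.integral_mono_on hL.le
      (_root_.intervalIntegrable_const (μ := volume) (c := (1:ℝ))) (hcont1.intervalIntegrable 0 L)
      (fun t _ => hρ1 _)
    simpa using this
  -- decomposition of the difference
  have hdiff : ∀ y ∈ Icc 0 L, u ε y - u0 y = (cε - c0) * B y + I y := by
    intro y hy
    rw [hcε y hy, hc0 y hy]
    have hint1 : IntervalIntegrable (fun t => (cε - c0) * ρ (t / ε)) volume 0 y :=
      (continuous_const.mul hcont1).intervalIntegrable _ _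
    have hint2 : IntervalIntegrable (fun t => (c0 - F t) * (ρ (t / ε) - m)) volume 0 y :=
      ((continuous_const.sub hFc).mul (hcont1.sub continuous_const)).intervalIntegrable _ _
    have hint3 : IntervalIntegrable (fun t => (c0 - F t) * m) volume 0 y :=
      ((continuous_const.sub hFc).mul continuous_const).intervalIntegrable _ _
    have he1 : (∫ t in (0:ℝ)..y, (cε - F t) * (a (t / ε))⁻¹)
        = ∫ t in (0:ℝ)..y, ((cε - c0) * ρ (t / ε)
            + ((c0 - F t) * (ρ (t / ε) - m) + (c0 - F t) * m)) :=
      intervalIntegral.integral_congr (fun t _ => by rw [hρdef]; ring)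
    have he2 : (∫ t in (0:ℝ)..y, (c0 - F t) * ((fun _ : ℝ => a0) t)⁻¹)
        = ∫ t in (0:ℝ)..y, (c0 - F t) * m :=
      intervalIntegral.integral_congr (fun t _ => by rw [ha0inv])
    rw [he1, he2, intervalIntegral.integral_add hint1 (hint2.add hint3),
      intervalIntegral.integral_add hint2 hint3, intervalIntegral.integral_const_mul]
    rw [hBdef, hIdef]
    ring
  -- difference of constants
  have hcdiff : |cε - c0| * L ≤ ε * K := by
    have hdL := hdiff L ⟨hL.le, le_refl L⟩
    rw [(hu_bc ε hε).2, hu0_bc.2, sub_self] at hdL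
    have hBLpos : 0 < B L := lt_of_lt_of_le hL hBL
    have heqc : (cε - c0) * B L = - I L := by linarith
    have h1 : |cε - c0| * L ≤ |cε - c0| * B L :=
      mul_le_mul_of_nonneg_left hBL (abs_nonneg _)
    have h2 : |cε - c0| * B L = |I L| := by
      rw [← abs_of_pos hBLpos, ← abs_mul, heqc, abs_neg]
    rw [h2] at h1
    exact le_trans h1 (hIbound L ⟨hL.le, le_refl L⟩)
  -- final estimate
  have hfinal : |u ε x - u0 x| ≤ lam⁻¹ * (ε * K) + ε * K := by
    have hsplit : |u ε x - u0 x| ≤ |cε - c0| * (lam⁻¹ * L) + ε * K := by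
      rw [hdiff x hx]
      calc |(cε - c0) * B x + I x| ≤ |(cε - c0) * B x| + |I x| := abs_add_le _ _
        _ ≤ |cε - c0| * (lam⁻¹ * L) + ε * K := by
            refine add_le_add ?_ (hIbound x hx)
            rw [abs_mul]
            exact mul_le_mul_of_nonneg_left (hBbound x hx) (abs_nonneg _)
    have hstep : |cε - c0| * (lam⁻¹ * L) ≤ lam⁻¹ * (ε * K) := by
      have hli := mul_le_mul_of_nonneg_left hcdiff (inv_nonneg.mpr hlam.le)
      nlinarith [hli]
    linarith
  calc |u ε x - u0 x| ≤ lam⁻¹ * (ε * K) + ε * K := hfinal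
    _ = (K * (lam⁻¹ + 1)) * ε := by ring
end

section
/- One-dimensional two-scale expansion estimate: Let a : ℝ → ℝ be smooth 1-periodic with λ ≤ a ≤ 1, O = (0,1), f smooth. Let φ be the 1-periodic function with φ(0)=0 solving (a(y)(φ'(y)+1))' = 0, let uₑ, u₀ be the solutions of −(a(x/ε)uₑ')' = f and −a₀u₀'' = f with zero boundary values on O. Set vₑ(x) := u₀(x) + ε φ(x/ε) u₀'(x). Then for all ε with 1/ε ∈ ℕ, ∫₀¹ |uₑ − vₑ|² + |uₑ' − vₑ'|² ≤ (4/λ²)·(max|φ|²)·ε² ∫₀¹ |u₀''|². -/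
open MeasureTheory Set
open scoped ContDiff

set_option maxHeartbeats 3200000 in
/-- One-dimensional two-scale expansion estimate: with the periodic corrector `φ`,
the two-scale expansion `v ε = u₀ + ε φ(·/ε) u₀'` approximates `u ε` in `H¹(0,1)`
with error of order `ε`, whenever `1/ε ∈ ℕ`. -/
theorem stmt3 (lam : ℝ) (hlam : 0 < lam)
    (a f : ℝ → ℝ)
    (ha : ContDiff ℝ (⊤ : ℕ∞) a) (haper : ∀ y, a (y + 1) = a y)
    (hbd : ∀ y, a y ∈ Icc lam 1)
    (hf : ContDiff ℝ (⊤ : ℕ∞) f)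
    (a0 : ℝ) (ha0 : a0 = (∫ y in (0:ℝ)..1, (a y)⁻¹)⁻¹)
    (φ : ℝ → ℝ) (hφ0 : φ 0 = 0) (hφ : ContDiff ℝ (⊤ : ℕ∞) φ)
    (hφper : ∀ y, φ (y + 1) = φ y)
    (hφeq : ∀ y : ℝ, deriv (fun t => a t * (deriv φ t + 1)) y = 0)
    (u : ℝ → ℝ → ℝ) (u0 : ℝ → ℝ)
    (hu_smooth : ∀ ε > (0:ℝ), ContDiff ℝ (⊤ : ℕ∞) (u ε))
    (hu_eq : ∀ ε > (0:ℝ), ∀ x ∈ Ioo (0:ℝ) 1,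
        deriv (fun x' => a (x' / ε) * deriv (u ε) x') x = - f x)
    (hu_bc : ∀ ε > (0:ℝ), u ε 0 = 0 ∧ u ε 1 = 0)
    (hu0_smooth : ContDiff ℝ (⊤ : ℕ∞) u0)
    (hu0_eq : ∀ x ∈ Ioo (0:ℝ) 1, a0 * deriv (deriv u0) x = - f x)
    (hu0_bc : u0 0 = 0 ∧ u0 1 = 0) :
    ∀ ε > (0:ℝ), (∃ n : ℕ, (ε)⁻¹ = (n : ℝ)) →
      (∫ x in (0:ℝ)..1,
          ((u ε x - (u0 x + ε * φ (x / ε) * deriv u0 x)) ^ 2 +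
            (deriv (u ε) x - deriv (fun t => u0 t + ε * φ (t / ε) * deriv u0 t) x) ^ 2)) ≤
        (4 / lam ^ 2) * (⨆ y : ℝ, |φ y|) ^ 2 * ε ^ 2 *
          ∫ x in (0:ℝ)..1, (deriv (deriv u0) x) ^ 2 := by
  intro ε hε hex
  obtain ⟨n, hn⟩ := hex
  have h1le : (∞ : WithTop ℕ∞) ≠ 0 := by simp
  replace ha : ContDiff ℝ ∞ a := ha.of_le (by simp)
  replace hφ : ContDiff ℝ ∞ φ := hφ.of_le (by simp)
  replace hu0_smooth : ContDiff ℝ ∞ u0 := hu0_smooth.of_le (by simp)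
  have hε0 : ε ≠ 0 := ne_of_gt hε
  have hapos : ∀ y, 0 < a y := fun y => lt_of_lt_of_le hlam (hbd y).1
  have hane : ∀ y, a y ≠ 0 := fun y => (hapos y).ne'
  -- smoothness of derivatives
  have hu0' : ContDiff ℝ ∞ (deriv u0) := (contDiff_infty_iff_deriv.mp hu0_smooth).2
  have hu0'' : ContDiff ℝ ∞ (deriv (deriv u0)) := (contDiff_infty_iff_deriv.mp hu0').2
  have hφ' : ContDiff ℝ ∞ (deriv φ) := (contDiff_infty_iff_deriv.mp hφ).2
  have hus : ContDiff ℝ ∞ (u ε) := (hu_smooth ε hε).of_le (by simp)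
  have hue' : ContDiff ℝ ∞ (deriv (u ε)) := (contDiff_infty_iff_deriv.mp hus).2
  -- the corrector identity : a y * (deriv φ y + 1) = a0
  have hcorr : ∀ y, a y * (deriv φ y + 1) = a0 := by
    have hconst : ∀ y, a y * (deriv φ y + 1) = a 0 * (deriv φ 0 + 1) := fun y =>
      is_const_of_deriv_eq_zero
        ((ha.mul (hφ'.add contDiff_const)).differentiable h1le) hφeq y 0
    have hainv_cont : Continuous fun y => (a y)⁻¹ := ha.continuous.inv₀ hane
    have hainv_int : IntervalIntegrable (fun y => (a y)⁻¹) volume 0 1 :=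
      hainv_cont.intervalIntegrable 0 1
    have hIa : (1:ℝ) ≤ ∫ y in (0:ℝ)..1, (a y)⁻¹ := by
      have h1 : (∫ _ in (0:ℝ)..1, (1:ℝ)) ≤ ∫ y in (0:ℝ)..1, (a y)⁻¹ := by
        apply intervalIntegral.integral_mono_on zero_le_one intervalIntegrable_const hainv_int
        intro x _
        nlinarith [mul_inv_cancel₀ (hane x), inv_pos.mpr (hapos x), (hbd x).2]
      simpa using h1
    have hφ'eq : ∀ y, deriv φ y = a 0 * (deriv φ 0 + 1) * (a y)⁻¹ - 1 := by
      intro y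
      have h : a 0 * (deriv φ 0 + 1) * (a y)⁻¹ = deriv φ y + 1 := by
        rw [← hconst y]
        field_simp [hane y]
      linarith [h]
    have hφ'int : ∫ y in (0:ℝ)..1, deriv φ y = 0 := by
      rw [intervalIntegral.integral_deriv_eq_sub
        (fun x _ => (hφ.differentiable h1le).differentiableAt)
        ((hφ'.continuous).intervalIntegrable 0 1)]
      have h1 : φ 1 = φ 0 := by simpa using hφper 0
      rw [h1]; ring
    have hint2 : (0:ℝ) = a 0 * (deriv φ 0 + 1) * (∫ y in (0:ℝ)..1, (a y)⁻¹) - 1 := by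
      have e1 : (∫ y in (0:ℝ)..1, deriv φ y) =
          a 0 * (deriv φ 0 + 1) * (∫ y in (0:ℝ)..1, (a y)⁻¹) - 1 := by
        rw [intervalIntegral.integral_congr
          (g := fun y => a 0 * (deriv φ 0 + 1) * (a y)⁻¹ - 1) (fun y _ => hφ'eq y)]
        rw [intervalIntegral.integral_sub (hainv_int.const_mul _)
          intervalIntegrable_const, intervalIntegral.integral_const_mul,
          intervalIntegral.integral_const]
        simp
      rw [← e1, hφ'int]
    have hκ : a 0 * (deriv φ 0 + 1) = a0 := by
      rw [ha0]
      exact eq_inv_of_mul_eq_one_right (by linarith [hint2])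
    intro y; rw [hconst y, hκ]
  -- derivatives of v
  set v : ℝ → ℝ := fun t => u0 t + ε * φ (t / ε) * deriv u0 t with hvdef
  clear_value v
  have hφcomp : ∀ x : ℝ, HasDerivAt (fun t : ℝ => φ (t / ε)) (deriv φ (x / ε) * ε⁻¹) x := by
    intro x
    have h1 : HasDerivAt (fun t : ℝ => t / ε) ε⁻¹ x := by
      simpa [one_div] using (hasDerivAt_id x).div_const ε
    exact ((hφ.differentiable h1le (x / ε)).hasDerivAt).comp x h1
  set Q : ℝ → ℝ := fun x =>
    (1 + deriv φ (x / ε)) * deriv u0 x + ε * φ (x / ε) * deriv (deriv u0) x with hQdef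
  clear_value Q
  have hvd : ∀ x : ℝ, HasDerivAt v (Q x) x := by
    intro x
    have h0 : HasDerivAt u0 (deriv u0 x) x := (hu0_smooth.differentiable h1le x).hasDerivAt
    have h1 : HasDerivAt (deriv u0) (deriv (deriv u0) x) x :=
      (hu0'.differentiable h1le x).hasDerivAt
    have h2 : HasDerivAt (fun t : ℝ => ε * φ (t / ε)) (ε * (deriv φ (x / ε) * ε⁻¹)) x :=
      (hφcomp x).const_mul ε
    have h3 := h0.add (h2.mul h1)
    convert h3 using 1
    · rfl
    · rfl
    · rw [hvdef]; rfl
    rw [hQdef]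
    field_simp
    ring
  set w : ℝ → ℝ := fun x => u ε x - v x with hwdef
  clear_value w
  set W : ℝ → ℝ := fun x => deriv (u ε) x - Q x with hWdef
  clear_value W
  have hwd : ∀ x, HasDerivAt w (W x) x := by
    intro x
    rw [hwdef, hWdef]
    exact ((hus.differentiable h1le x).hasDerivAt).sub (hvd x)
  have hw' : deriv w = W := funext fun x => (hwd x).deriv
  -- continuity facts
  have hφc1 : Continuous fun x : ℝ => φ (x / ε) :=
    hφ.continuous.comp (continuous_id.div_const ε)
  have hφc2 : Continuous fun x : ℝ => deriv φ (x / ε) :=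
    hφ'.continuous.comp (continuous_id.div_const ε)
  have hQc : Continuous Q := by
    rw [hQdef]
    exact ((continuous_const.add hφc2).mul hu0'.continuous).add
      ((continuous_const.mul hφc1).mul hu0''.continuous)
  have hWc : Continuous W := by
    rw [hWdef]; exact hue'.continuous.sub hQc
  have hwc : Continuous w := by
    rw [hwdef, hvdef]
    exact hus.continuous.sub (hu0_smooth.continuous.add
      ((continuous_const.mul hφc1).mul hu0'.continuous))
  -- the constant C
  obtain ⟨C, hC⟩ : ∃ C, ∀ x ∈ Ioo (0:ℝ) 1,
      a (x / ε) * deriv (u ε) x - a0 * deriv u0 x = C := by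
    set G : ℝ → ℝ := fun x => a (x / ε) * deriv (u ε) x - a0 * deriv u0 x with hGdef
    have hFcd : ContDiff ℝ ∞ fun x : ℝ => a (x / ε) * deriv (u ε) x :=
      (ha.comp (contDiff_id.div_const ε)).mul hue'
    have hHcd : ContDiff ℝ ∞ fun x : ℝ => a0 * deriv u0 x := contDiff_const.mul hu0'
    have hGcd : ContDiff ℝ ∞ G := hFcd.sub hHcd
    have hG' : ∀ x ∈ Ioo (0:ℝ) 1, deriv G x = 0 := by
      intro x hx
      have hsub : deriv G x = deriv (fun x' => a (x' / ε) * deriv (u ε) x') x -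
          deriv (fun x' => a0 * deriv u0 x') x :=
        deriv_sub (hFcd.differentiable h1le).differentiableAt
          (hHcd.differentiable h1le).differentiableAt
      rw [hsub, hu_eq ε hε x hx, deriv_const_mul a0 (hu0'.differentiable h1le x),
        hu0_eq x hx]
      ring
    refine ⟨G (1/2), fun x hx => ?_⟩
    have hsub : uIcc (1/2 : ℝ) x ⊆ Ioo 0 1 := by
      intro t ht
      rcases mem_uIcc.mp ht with h | h
      · exact ⟨by linarith [h.1], by linarith [h.2, hx.2]⟩
      · exact ⟨by linarith [h.1, hx.1], by linarith [h.2]⟩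
    have hftc : ∫ t in (1/2 : ℝ)..x, deriv G t = G x - G (1/2) :=
      intervalIntegral.integral_deriv_eq_sub
        (fun t _ => (hGcd.differentiable h1le).differentiableAt)
        (((contDiff_infty_iff_deriv.mp hGcd).2.continuous).intervalIntegrable _ _)
    have hzero : ∫ t in (1/2 : ℝ)..x, deriv G t = 0 := by
      rw [intervalIntegral.integral_congr (g := fun _ => (0:ℝ)) fun t ht => hG' t (hsub ht)]
      simp
    have := hzero ▸ hftc
    linarith [this]
  -- supremum of |φ|
  set M : ℝ := ⨆ y : ℝ, |φ y| with hMdef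
  clear_value M
  have hper : Function.Periodic φ 1 := hφper
  have hMb : ∀ y, |φ y| ≤ M := by
    have hbdd : BddAbove (range fun y => |φ y|) := by
      obtain ⟨Cb, hCb⟩ := (isCompact_Icc (a := (0:ℝ)) (b := 1)).exists_bound_of_continuousOn
        (hφ.continuous.continuousOn)
      refine ⟨Cb, ?_⟩
      rintro z ⟨y, rfl⟩
      have h1 : φ (Int.fract y) = φ y := by
        have h := hper.sub_int_mul_eq (x := y) ⌊y⌋
        rw [mul_one] at h
        rw [← Int.self_sub_floor]
        exact h
      have h2 : Int.fract y ∈ Icc (0:ℝ) 1 :=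
        ⟨Int.fract_nonneg y, le_of_lt (Int.fract_lt_one y)⟩
      calc |φ y| = |φ (Int.fract y)| := by rw [h1]
        _ = ‖φ (Int.fract y)‖ := (Real.norm_eq_abs _).symm
        _ ≤ Cb := hCb _ h2
    intro y
    rw [hMdef]
    exact le_ciSup hbdd y
  have hM0 : 0 ≤ M := le_trans (abs_nonneg _) (hMb 0)
  -- boundary values of w
  have hφnat : ∀ m : ℕ, φ (m : ℝ) = 0 := by
    intro m
    induction m with
    | zero => simpa using hφ0
    | succ k ih => push_cast; rw [hper k]; exact ih
  have hw0 : w 0 = 0 := by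
    rw [hwdef, hvdef]
    simp [hφ0, (hu_bc ε hε).1, hu0_bc.1]
  have hw1 : w 1 = 0 := by
    rw [hwdef, hvdef]
    have h1 : (1:ℝ) / ε = (n : ℝ) := by rw [one_div, hn]
    simp [h1, hφnat n, (hu_bc ε hε).2, hu0_bc.2]
  -- pointwise estimate
  have hWid : ∀ x ∈ Ioo (0:ℝ) 1,
      a (x / ε) * W x = C - ε * (a (x / ε) * φ (x / ε) * deriv (deriv u0) x) := by
    intro x hx
    rw [hWdef, hQdef]
    simp only
    linear_combination (hC x hx) - (deriv u0 x) * (hcorr (x / ε))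
  have hptwise : ∀ x ∈ Ioo (0:ℝ) 1,
      lam ^ 2 * W x ^ 2 ≤ 2 * lam * C * W x + ε ^ 2 * M ^ 2 * (deriv (deriv u0) x) ^ 2 := by
    intro x hx
    have h1 := hWid x hx
    have hA := hbd (x / ε)
    have hφm := hMb (x / ε)
    have hCω : C * W x = a (x / ε) * W x ^ 2 +
        ε * (a (x / ε) * φ (x / ε) * deriv (deriv u0) x * W x) := by
      linear_combination (-(W x)) * h1
    have h4 : |a (x / ε) * φ (x / ε) * deriv (deriv u0) x * W x| ≤
        M * (|deriv (deriv u0) x| * |W x|) := by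
      rw [abs_mul, abs_mul, abs_mul]
      have h5 : |a (x / ε)| ≤ 1 := abs_le.mpr ⟨by linarith [hA.1], hA.2⟩
      have h6 : |a (x / ε)| * |φ (x / ε)| ≤ M := by
        nlinarith [abs_nonneg (a (x / ε)), abs_nonneg (φ (x / ε))]
      calc |a (x / ε)| * |φ (x / ε)| * |deriv (deriv u0) x| * |W x|
          = (|a (x / ε)| * |φ (x / ε)|) * (|deriv (deriv u0) x| * |W x|) := by ring
        _ ≤ M * (|deriv (deriv u0) x| * |W x|) :=
            mul_le_mul_of_nonneg_right h6 (mul_nonneg (abs_nonneg _) (abs_nonneg _))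
    have h11 : -(M * (|deriv (deriv u0) x| * |W x|)) ≤
        a (x / ε) * φ (x / ε) * deriv (deriv u0) x * W x := (abs_le.mp h4).1
    have h14 : 2 * (lam * ε) * (-(M * (|deriv (deriv u0) x| * |W x|))) ≤
        2 * (lam * ε) * (a (x / ε) * φ (x / ε) * deriv (deriv u0) x * W x) :=
      mul_le_mul_of_nonneg_left h11 (by positivity)
    have h9 : 2 * lam * (ε * M * (|deriv (deriv u0) x| * |W x|)) ≤
        lam ^ 2 * W x ^ 2 + ε ^ 2 * M ^ 2 * (deriv (deriv u0) x) ^ 2 := by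
      rw [← abs_mul]
      rcases abs_cases (deriv (deriv u0) x * W x) with h | h
      · rw [h.1]
        nlinarith [sq_nonneg (lam * W x - ε * M * deriv (deriv u0) x)]
      · rw [h.1]
        nlinarith [sq_nonneg (lam * W x + ε * M * deriv (deriv u0) x)]
    have h13 : lam * (lam * W x ^ 2) ≤ lam * (a (x / ε) * W x ^ 2) :=
      mul_le_mul_of_nonneg_left
        (mul_le_mul_of_nonneg_right hA.1 (sq_nonneg _)) hlam.le
    have h15 : 2 * lam * (C * W x) = 2 * lam * (a (x / ε) * W x ^ 2) +
        2 * lam * (ε * (a (x / ε) * φ (x / ε) * deriv (deriv u0) x * W x)) := by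
      linear_combination (2 * lam) * hCω
    linarith only [h15, h14, h9, h13]
  -- integrate the pointwise estimate
  have hd2c : Continuous fun x => deriv (deriv u0) x := hu0''.continuous
  have hW2int : IntervalIntegrable (fun x => W x ^ 2) volume 0 1 :=
    (hWc.pow 2).intervalIntegrable 0 1
  have hd2int : IntervalIntegrable (fun x => (deriv (deriv u0) x) ^ 2) volume 0 1 :=
    (hd2c.pow 2).intervalIntegrable 0 1
  have hWint : IntervalIntegrable W volume 0 1 := hWc.intervalIntegrable 0 1
  have hWabsint : IntervalIntegrable (fun x => |W x|) volume 0 1 :=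
    hWc.abs.intervalIntegrable 0 1
  have haeIoo : ∀ᵐ x ∂(volume.restrict (Icc (0:ℝ) 1)), x ∈ Ioo (0:ℝ) 1 := by
    have h0 : volume (Icc (0:ℝ) 1 \ Ioo 0 1) = 0 := by
      rw [Icc_diff_Ioo_same zero_le_one]
      exact ((Set.finite_singleton 1).insert 0).measure_zero volume
    have h1 : (volume.restrict (Icc (0:ℝ) 1)) (Icc (0:ℝ) 1 \ Ioo 0 1) = 0 := by
      rw [Measure.restrict_apply' measurableSet_Icc]
      exact measure_mono_null inter_subset_left h0
    filter_upwards [ae_restrict_mem measurableSet_Icc,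
      (measure_eq_zero_iff_ae_notMem.mp h1)] with x hx hx2
    by_contra h
    exact hx2 ⟨hx, h⟩
  have hintineq : lam ^ 2 * ∫ x in (0:ℝ)..1, W x ^ 2 ≤
      2 * lam * C * (∫ x in (0:ℝ)..1, W x) +
        ε ^ 2 * M ^ 2 * ∫ x in (0:ℝ)..1, (deriv (deriv u0) x) ^ 2 := by
    have h1 : (∫ x in (0:ℝ)..1, lam ^ 2 * W x ^ 2) ≤
        ∫ x in (0:ℝ)..1, (2 * lam * C * W x + ε ^ 2 * M ^ 2 * (deriv (deriv u0) x) ^ 2) := by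
      apply intervalIntegral.integral_mono_ae_restrict zero_le_one
        (hW2int.const_mul _) ((hWint.const_mul _).add (hd2int.const_mul _))
      filter_upwards [haeIoo] with x hx
      exact hptwise x hx
    rw [intervalIntegral.integral_const_mul] at h1
    rw [intervalIntegral.integral_add (hWint.const_mul _) (hd2int.const_mul _),
      intervalIntegral.integral_const_mul, intervalIntegral.integral_const_mul] at h1
    exact h1
  have hWftc : ∫ x in (0:ℝ)..1, W x = 0 := by
    have h := intervalIntegral.integral_deriv_eq_sub (f := w)
      (fun x _ => (hwd x).differentiableAt) (hw' ▸ hWint)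
    rw [hw'] at h
    rw [h, hw0, hw1]
    ring
  set J : ℝ := ∫ x in (0:ℝ)..1, W x ^ 2 with hJdef
  clear_value J
  set Y : ℝ := ∫ x in (0:ℝ)..1, (deriv (deriv u0) x) ^ 2 with hYdef
  clear_value Y
  have hJY : lam ^ 2 * J ≤ ε ^ 2 * M ^ 2 * Y := by
    rw [hWftc] at hintineq; linarith [hintineq]
  have hJ0 : 0 ≤ J := by
    rw [hJdef]
    exact intervalIntegral.integral_nonneg zero_le_one (fun x _ => sq_nonneg _)
  have hY0 : 0 ≤ Y := by
    rw [hYdef]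
    exact intervalIntegral.integral_nonneg zero_le_one (fun x _ => sq_nonneg _)
  -- Poincaré
  set I : ℝ := ∫ x in (0:ℝ)..1, |W x| with hIdef
  clear_value I
  have hI0 : 0 ≤ I := by
    rw [hIdef]
    exact intervalIntegral.integral_nonneg zero_le_one (fun x _ => abs_nonneg _)
  have hI2 : I ^ 2 ≤ J := by
    have h1 : (0:ℝ) ≤ ∫ x in (0:ℝ)..1, (|W x| - I) ^ 2 :=
      intervalIntegral.integral_nonneg zero_le_one (fun x _ => sq_nonneg _)
    have h2 : (∫ x in (0:ℝ)..1, (|W x| - I) ^ 2) =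
        (∫ x in (0:ℝ)..1, W x ^ 2) - 2 * I * (∫ x in (0:ℝ)..1, |W x|) +
          (∫ x in (0:ℝ)..1, (I:ℝ) ^ 2) := by
      rw [← intervalIntegral.integral_const_mul,
        ← intervalIntegral.integral_sub hW2int (hWabsint.const_mul _),
        ← intervalIntegral.integral_add (hW2int.sub (hWabsint.const_mul _))
          intervalIntegrable_const]
      apply intervalIntegral.integral_congr
      intro x _
      have := sq_abs (W x)
      ring_nf
      nlinarith [sq_abs (W x)]
    rw [h2, ← hIdef, ← hJdef, intervalIntegral.integral_const] at h1
    simp at h1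
    nlinarith [h1]
  have hwle : ∀ x ∈ Icc (0:ℝ) 1, w x ^ 2 ≤ J := by
    intro x hx
    have hftc : ∫ t in (0:ℝ)..x, W t = w x := by
      have h := intervalIntegral.integral_deriv_eq_sub (f := w) (a := 0) (b := x)
        (fun t _ => (hwd t).differentiableAt) (by rw [hw']; exact hWc.intervalIntegrable 0 x)
      rw [hw'] at h
      rw [h, hw0]; ring
    have h1 : |w x| ≤ I := by
      rw [← hftc]
      calc |∫ t in (0:ℝ)..x, W t| ≤ ∫ t in (0:ℝ)..x, |W t| :=
            intervalIntegral.abs_integral_le_integral_abs hx.1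
        _ ≤ I := by
            rw [hIdef]
            exact intervalIntegral.integral_mono_interval le_rfl hx.1 hx.2
              (Filter.Eventually.of_forall fun t => abs_nonneg _) hWabsint
    calc w x ^ 2 = |w x| ^ 2 := (sq_abs _).symm
      _ ≤ I ^ 2 := pow_le_pow_left₀ (abs_nonneg _) h1 2
      _ ≤ J := hI2
  have hw2int : IntervalIntegrable (fun x => w x ^ 2) volume 0 1 :=
    (hwc.pow 2).intervalIntegrable 0 1
  have hintw : (∫ x in (0:ℝ)..1, w x ^ 2) ≤ J := by
    have h1 : (∫ x in (0:ℝ)..1, w x ^ 2) ≤ ∫ _ in (0:ℝ)..1, J :=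
      intervalIntegral.integral_mono_on zero_le_one hw2int intervalIntegrable_const hwle
    simpa using h1
  -- assemble
  have hgoal_eq : (∫ x in (0:ℝ)..1,
      ((u ε x - (u0 x + ε * φ (x / ε) * deriv u0 x)) ^ 2 +
        (deriv (u ε) x - deriv v x) ^ 2)) =
      (∫ x in (0:ℝ)..1, w x ^ 2) + ∫ x in (0:ℝ)..1, W x ^ 2 := by
    rw [← intervalIntegral.integral_add hw2int hW2int]
    apply intervalIntegral.integral_congr
    intro x _
    dsimp only
    rw [(hvd x).deriv, hwdef, hWdef, hvdef, hQdef]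
  rw [hgoal_eq, ← hJdef]
  have hJle : J ≤ ε ^ 2 * M ^ 2 * Y / lam ^ 2 := by
    rw [le_div_iff₀ (by positivity : (0:ℝ) < lam ^ 2)]
    nlinarith [hJY]
  have hq : 0 ≤ ε ^ 2 * M ^ 2 * Y / lam ^ 2 := by
    apply div_nonneg _ (sq_nonneg lam)
    have : 0 ≤ ε ^ 2 * M ^ 2 := by positivity
    nlinarith [hY0]
  have hrhs : 4 / lam ^ 2 * M ^ 2 * ε ^ 2 * Y = 4 * (ε ^ 2 * M ^ 2 * Y / lam ^ 2) := by
    field_simp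
  rw [← hMdef] at *
  calc (∫ x in (0:ℝ)..1, w x ^ 2) + J ≤ 2 * J := by linarith [hintw]
    _ ≤ 2 * (ε ^ 2 * M ^ 2 * Y / lam ^ 2) := by linarith [hJle]
    _ ≤ 4 / lam ^ 2 * M ^ 2 * ε ^ 2 * Y := by rw [hrhs]; linarith [hq]
end
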